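/- arXiv:2603.06616 — 4 statements merged into one kernel-verified Lean document; each statement's English description precedes it below -/
import Mathlib

section
/- Let s₁,…,s_{n+1} be exchangeable real-valued random variables and let λ̂ = inf{λ : (1 + Σ_{i=1}^n 1{s_i > λ})/(n+1) ≤ α} for α ∈ (1/(n+1), 1). Then P(s_{n+1} > λ̂) ≤ α. -/
/-! By the definition of `λ̂` as an infimum, `λ̂ < s_{n+1}` holds exactly when the number of scores
`s_i ≥ s_{n+1}` (`s_{n+1}` itself included) is at most `k = ⌊α (n + 1)⌋₊`. In any vector of scores
at most `k` coordinates have this property, since all of them lie above the smallest one among them.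
By exchangeability every coordinate has it with the same probability, so
`(n + 1) P(λ̂ < s_{n+1}) ≤ k ≤ α (n + 1)`. -/

open MeasureTheory Finset
open scoped ENNReal

theorem exists_lt_forall_lt_iff_le {ι : Type*} [Finite ι] (x : ι → ℝ) (t : ℝ) :
    ∃ l < t, ∀ i, l < x i ↔ t ≤ x i := by
  set U := insert (t - 1) (x '' {i | x i < t})
  have hU : U.Finite := ((Set.finite_range x).subset (Set.image_subset_range _ _)).insert _
  have hlt : sSup U < t := by
    refine (hU.csSup_lt_iff (Set.insert_nonempty _ _)).2 ?_
    rintro _ (rfl | ⟨i, hi, rfl⟩)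
    exacts [sub_one_lt t, hi]
  refine ⟨sSup U, hlt, fun i => ⟨fun hi => ?_, hlt.trans_le⟩⟩
  by_contra! h
  exact (le_csSup hU.bddAbove (Or.inr ⟨i, h, rfl⟩)).not_gt hi

theorem sInf_card_lt_le_lt_iff {ι : Type*} [Fintype ι] (x : ι → ℝ) {c : ℝ} (hc₀ : 0 ≤ c)
    (hc : c < Fintype.card ι) (t : ℝ) :
    sInf {l : ℝ | (#{i | l < x i} : ℝ) ≤ c} < t ↔ (#{i | t ≤ x i} : ℝ) ≤ c := by
  obtain ⟨M, hM⟩ := (Set.finite_range x).bddAbove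
  obtain ⟨m, hm⟩ := (Set.finite_range x).bddBelow
  have hne : ∃ l, (#{i | l < x i} : ℝ) ≤ c := by
    refine ⟨M, ?_⟩
    rwa [filter_false_of_mem fun i _ => not_lt.2 (hM ⟨i, rfl⟩), card_empty, Nat.cast_zero]
  have hbdd : BddBelow {l : ℝ | (#{i | l < x i} : ℝ) ≤ c} := by
    refine ⟨m, fun l hl => not_lt.1 fun hlm => hc.not_ge ?_⟩
    rwa [Set.mem_ofPred_eq, filter_true_of_mem fun i _ => hlm.trans_le (hm ⟨i, rfl⟩),
      card_univ] at hl
  rw [csInf_lt_iff hbdd hne]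
  constructor
  · rintro ⟨l, hl, hlt⟩
    refine le_trans ?_ hl
    exact_mod_cast card_le_card fun i hi =>
      mem_filter.2 ⟨mem_univ i, hlt.trans_le (mem_filter.1 hi).2⟩
  · intro h
    obtain ⟨l, hlt, hiff⟩ := exists_lt_forall_lt_iff_le x t
    exact ⟨l, by simpa only [Set.mem_ofPred_eq, hiff] using h, hlt⟩

theorem card_mul_measure_le_of_exchangeable {ι β : Type*} [Fintype ι] [MeasurableSpace β]
    {ν : Measure (ι → β)} (hν : ∀ σ : Equiv.Perm ι, ν.map (fun x => x ∘ σ) = ν)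
    {P : (ι → β) → ι → Prop} [∀ x, DecidablePred (P x)]
    (hP : ∀ j, MeasurableSet {x | P x j})
    (hPσ : ∀ (σ : Equiv.Perm ι) x j, P (x ∘ σ) j ↔ P x (σ j))
    {k : ℕ} (hk : ∀ x, #{j | P x j} ≤ k) (j : ι) :
    Fintype.card ι * ν {x | P x j} ≤ k * ν Set.univ := by
  classical
  have hPj : ∀ j', ν {x | P x j'} = ν {x | P x j} := fun j' => by
    have : {x | P x j'} = (fun x => x ∘ Equiv.swap j j') ⁻¹' {x | P x j} := by
      ext x; simp [hPσ]
    rw [this, ← Measure.map_apply (by fun_prop) (hP j), hν]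
  calc Fintype.card ι * ν {x | P x j} = ∑ j', ν {x | P x j'} := by simp [hPj]
    _ = ∫⁻ x, (#{j' | P x j'} : ℝ≥0∞) ∂ν := by
      simp_rw [← lintegral_indicator_one (hP _), ← sum_boole]
      rw [← lintegral_finsetSum _ fun j' _ => measurable_one.indicator (hP j')]
      simp [Set.indicator_apply]
    _ ≤ ∫⁻ _, (k : ℝ≥0∞) ∂ν := lintegral_mono fun x => Nat.cast_le.2 (hk x)
    _ = k * ν Set.univ := lintegral_const _

section countGE

variable {ι β : Type*} [Fintype ι] [LinearOrder β]

def countGE (x : ι → β) (j : ι) : ℕ := #{i | x j ≤ x i}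

theorem countGE_comp_perm (x : ι → β) (σ : Equiv.Perm ι) (j : ι) :
    countGE (x ∘ σ) j = countGE x (σ j) :=
  card_equiv σ (by simp)

theorem card_countGE_le_le (x : ι → β) (k : ℕ) : #{j | countGE x j ≤ k} ≤ k := by
  obtain hJ | hJ := (univ.filter fun j => countGE x j ≤ k).eq_empty_or_nonempty
  · simp [hJ]
  obtain ⟨j₀, hj₀, hmin⟩ := exists_min_image _ x hJ
  calc #{j | countGE x j ≤ k} ≤ countGE x j₀ :=
        card_le_card fun j hj => by simpa using hmin j hj
    _ ≤ k := (mem_filter.1 hj₀).2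

theorem countGE_last {n : ℕ} (x : Fin (n + 1) → β) :
    countGE x (Fin.last n) = #{i : Fin n | x (Fin.last n) ≤ x i.castSucc} + 1 := by
  simp only [countGE, card_filter, Fin.sum_univ_castSucc, le_refl, if_true]

theorem measurable_countGE (j : ι) :
    Measurable fun x : ι → ℝ => countGE x j := by
  simp only [countGE, card_filter]
  exact Finset.measurable_sum _ fun i _ =>
    Measurable.ite (measurableSet_le (measurable_pi_apply j) (measurable_pi_apply i))
      measurable_const measurable_const

end countGE

theorem sInf_lt_last_iff_countGE_le {n : ℕ} {α : ℝ} (hα1 : 1 / (n + 1) < α) (hα2 : α < 1)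
    (x : Fin (n + 1) → ℝ) :
    sInf {l : ℝ | (1 + ∑ i : Fin n, (if l < x i.castSucc then (1 : ℝ) else 0)) / (n + 1) ≤ α}
      < x (Fin.last n) ↔ countGE x (Fin.last n) ≤ ⌊α * (n + 1)⌋₊ := by
  have hn : (0 : ℝ) < n + 1 := by positivity
  have hα_one : 1 ≤ α * (n + 1) := ((div_lt_iff₀ hn).1 hα1).le
  have hset : ∀ l : ℝ, (1 + ∑ i : Fin n, (if l < x i.castSucc then (1 : ℝ) else 0)) / (n + 1)
      ≤ α ↔ (#{i : Fin n | l < x i.castSucc} : ℝ) ≤ α * (n + 1) - 1 := fun l => by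
    rw [sum_boole, div_le_iff₀ hn, le_sub_iff_add_le, add_comm]
  simp only [hset]
  rw [sInf_card_lt_le_lt_iff _ (by linarith) (by rw [Fintype.card_fin]; nlinarith),
    countGE_last, Nat.le_floor_iff (by linarith), le_sub_iff_add_le, Nat.cast_succ]

/-- Split conformal coverage guarantee: if s₁,…,s_{n+1} are exchangeable and
λ̂ = inf{λ : (1 + Σ_{i=1}^n 1{s_i > λ})/(n+1) ≤ α} with α ∈ (1/(n+1), 1),
then P(s_{n+1} > λ̂) ≤ α. -/
theorem racer_risk_control {Ω : Type*} [MeasurableSpace Ω]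
    (μ : Measure Ω) [IsProbabilityMeasure μ]
    (n : ℕ) (s : Fin (n + 1) → Ω → ℝ) (hmeas : ∀ i, Measurable (s i))
    (hexch : ∀ σ : Equiv.Perm (Fin (n + 1)),
      Measure.map (fun ω i => s (σ i) ω) μ = Measure.map (fun ω i => s i ω) μ)
    (α : ℝ) (hα1 : 1 / (n + 1) < α) (hα2 : α < 1)
    (lamhat : Ω → ℝ)
    (hlam : ∀ ω, lamhat ω = sInf {lam : ℝ |
      (1 + ∑ i : Fin n, (if lam < s i.castSucc ω then (1 : ℝ) else 0)) / (n + 1) ≤ α}) :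
    (μ {ω | lamhat ω < s (Fin.last n) ω}).toReal ≤ α := by
  have hα₀ : 0 ≤ α := (by positivity : (0 : ℝ) ≤ 1 / (n + 1)).trans hα1.le
  set k := ⌊α * (n + 1)⌋₊
  set F : Ω → Fin (n + 1) → ℝ := fun ω i => s i ω
  have hF : Measurable F := measurable_pi_lambda _ hmeas
  have hk : ∀ j : Fin (n + 1), MeasurableSet {x | countGE x j ≤ k} := fun j =>
    measurableSet_le (measurable_countGE j) measurable_const
  have hevent : {ω | lamhat ω < s (Fin.last n) ω} = F ⁻¹' {x | countGE x (Fin.last n) ≤ k} := by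
    ext ω
    simpa only [Set.mem_ofPred_eq, Set.mem_preimage, hlam] using
      sInf_lt_last_iff_countGE_le hα1 hα2 (F ω)
  have hν : ∀ σ : Equiv.Perm (Fin (n + 1)), (μ.map F).map (fun x => x ∘ σ) = μ.map F :=
    fun σ => by rw [Measure.map_map (by fun_prop) hF]; exact hexch σ
  have : IsProbabilityMeasure (μ.map F) := Measure.isProbabilityMeasure_map hF.aemeasurable
  have hbound := card_mul_measure_le_of_exchangeable hν (P := fun x j => countGE x j ≤ k) hk
    (fun σ x j => by rw [countGE_comp_perm]) (card_countGE_le_le · k) (Fin.last n)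
  rw [Fintype.card_fin, measure_univ, mul_one] at hbound
  have hle := ENNReal.toReal_mono (ENNReal.natCast_ne_top k) hbound
  rw [ENNReal.toReal_mul, ENNReal.toReal_natCast, ENNReal.toReal_natCast, Nat.cast_succ] at hle
  have hfloor : (k : ℝ) ≤ α * (n + 1) := Nat.floor_le (by positivity)
  rw [hevent, ← Measure.map_apply hF (hk _)]
  nlinarith
end

section
/- Let s₁,…,s_{n+1} be i.i.d. real-valued random variables with continuous distribution, and let λ̂ = inf{λ : (1 + Σ_{i=1}^n 1{s_i > λ})/(n+1) ≤ α} for α ∈ (0,1) with α(n+1) ≥ 1. Then P(s_{n+1} > λ̂) ≥ α − 2/(n+1). -/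
/-!
Let `k = ⌊α (n + 1)⌋`. Whatever the scores, at least `k` of the `n + 1` indices have fewer than
`k` scores strictly above them: otherwise the largest score among the remaining indices would
have all higher scores inside that small set. The scores are exchangeable, so every index has
this property with the same probability, which is therefore at least `k / (n + 1)`, i.e. more
than `α - 1 / (n + 1)`. For the test index, barring ties (a null event, by independence and
continuity), a threshold just below `s_{n+1}` counts the same calibration scores as `s_{n+1}`
itself; if fewer than `k` of them lie above `s_{n+1}`, its calibration level is at most
`k / (n + 1) ≤ α`, so `λ̂ < s_{n+1}`.
-/

open MeasureTheory ProbabilityTheory Finset Filter Topology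
open scoped ENNReal

section Rank

variable {ι α : Type*} [Fintype ι] [LinearOrder α]

def numAbove (x : ι → α) (j : ι) : ℕ := #{i | x j < x i}

lemma le_card_numAbove_lt (x : ι → α) {k : ℕ} (hk : k ≤ Fintype.card ι) :
    k ≤ #{j | numAbove x j < k} := by
  by_contra! h
  have hne : ({j | k ≤ numAbove x j} : Finset ι).Nonempty := by
    by_contra! hempty
    have huniv : ({j | numAbove x j < k} : Finset ι) = univ :=
      eq_univ_of_forall fun j => mem_filter.2 ⟨mem_univ j, by
        by_contra! hj
        exact notMem_empty j (hempty ▸ mem_filter.2 ⟨mem_univ j, hj⟩)⟩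
    rw [huniv, card_univ] at h
    omega
  obtain ⟨j, hj, hmax⟩ := exists_max_image _ x hne
  refine (mem_filter.1 hj).2.not_gt (lt_of_le_of_lt (card_le_card fun i hi => ?_) h)
  simp only [mem_filter, mem_univ, true_and] at hi ⊢
  by_contra! hi'
  exact hi.not_ge (hmax i (mem_filter.2 ⟨mem_univ i, hi'⟩))

lemma numAbove_comp_perm (x : ι → α) (σ : Equiv.Perm ι) (j : ι) :
    numAbove (x ∘ σ) j = numAbove x (σ j) := by
  simp only [numAbove, Function.comp_apply]
  exact card_equiv σ (by simp)

lemma numAbove_last_eq_sum {R : Type*} [AddCommMonoidWithOne R] {n : ℕ} (x : Fin (n + 1) → α) :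
    (numAbove x (Fin.last n) : R) =
      ∑ i : Fin n, if x (Fin.last n) < x i.castSucc then 1 else 0 := by
  rw [numAbove, card_filter, Fin.sum_univ_castSucc]
  simp

variable [MeasurableSpace α] [TopologicalSpace α] [OpensMeasurableSpace α] [OrderClosedTopology α]
  [SecondCountableTopology α]

lemma measurable_numAbove (j : ι) : Measurable fun x : ι → α => numAbove x j := by
  simp only [numAbove, card_filter]
  exact Finset.measurable_sum _ fun i _ =>
    Measurable.ite (measurableSet_lt (measurable_pi_apply j) (measurable_pi_apply i))
      measurable_const measurable_const

end Rank

lemma exists_lt_forall_lt_iff {ι α : Type*} [Finite ι] [LinearOrder α] [TopologicalSpace α]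
    [OrderTopology α] [DenselyOrdered α] [NoMinOrder α] (y : ι → α) {t : α}
    (ht : ∀ i, y i ≠ t) : ∃ l < t, ∀ i, l < y i ↔ t < y i := by
  have h : ∀ᶠ l in 𝓝[<] t, ∀ i, l < y i ↔ t < y i := by
    refine eventually_all.2 fun i => ?_
    rcases (ht i).lt_or_gt with hi | hi
    · filter_upwards [nhdsWithin_le_nhds (eventually_gt_nhds hi)] with l hl
      simp [hl.not_gt, hi.not_gt]
    · filter_upwards [nhdsWithin_le_nhds (eventually_lt_nhds hi)] with l hl
      simp [hl, hi]
  obtain ⟨l, hl, hlt⟩ := (h.and self_mem_nhdsWithin).exists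
  exact ⟨l, hlt, hl⟩

namespace ProbabilityTheory

variable {Ω : Type*} [MeasurableSpace Ω] {μ : Measure Ω}

lemma IndepFun.measure_eq_eq_zero {β : Type*} [MeasurableSpace β] [MeasurableEq β]
    [IsProbabilityMeasure μ] {X Y : Ω → β} (hXY : IndepFun X Y μ) (hX : Measurable X)
    (hY : Measurable Y) (hatom : ∀ c, μ {ω | Y ω = c} = 0) : μ {ω | X ω = Y ω} = 0 := by
  have : IsProbabilityMeasure (μ.map Y) := Measure.isProbabilityMeasure_map hY.aemeasurable
  have hslice (x : β) : Prod.mk x ⁻¹' Set.diagonal β = {x} := by ext; simp [eq_comm]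
  have hsingle (x : β) : MeasurableSet ({x} : Set β) :=
    hslice x ▸ measurable_prodMk_left measurableSet_diagonal
  change μ ((fun ω => (X ω, Y ω)) ⁻¹' Set.diagonal β) = 0
  rw [← Measure.map_apply (hX.prodMk hY) measurableSet_diagonal,
    hXY.map_prod_eq_prod_map_map hX.aemeasurable hY.aemeasurable,
    Measure.prod_apply measurableSet_diagonal]
  simp only [hslice, Measure.map_apply hY (hsingle _)]
  simp [Set.preimage, hatom]

lemma iIndepFun.map_perm_eq {ι β : Type*} [Fintype ι] [MeasurableSpace β] {X : ι → Ω → β}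
    (hX : ∀ i, Measurable (X i)) (hindep : iIndepFun X μ) {ν : Measure β}
    (hident : ∀ i, μ.map (X i) = ν) (σ : Equiv.Perm ι) :
    μ.map (fun ω i => X (σ i) ω) = μ.map (fun ω i => X i ω) := by
  rw [(hindep.precomp σ.injective).map_fun_eq_pi_map fun i => (hX (σ i)).aemeasurable,
    hindep.map_fun_eq_pi_map fun i => (hX i).aemeasurable]
  simp [hident]

open Classical in
lemma natCast_le_sum_measure_of_le_card [IsProbabilityMeasure μ] {ι : Type*} [Fintype ι]
    {A : ι → Set Ω} (hA : ∀ i, MeasurableSet (A i)) {k : ℕ}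
    (hk : ∀ ω, k ≤ #{i | ω ∈ A i}) : (k : ℝ≥0∞) ≤ ∑ i, μ (A i) := by
  calc (k : ℝ≥0∞) = ∫⁻ _, (k : ℝ≥0∞) ∂μ := by simp
    _ ≤ ∫⁻ ω, ∑ i, (A i).indicator 1 ω ∂μ := lintegral_mono fun ω => by
        simpa [Set.indicator_apply] using hk ω
    _ = ∑ i, μ (A i) := by
        rw [lintegral_finsetSum _ fun i _ => measurable_one.indicator (hA i)]
        simp [lintegral_indicator_one (hA _)]

lemma measure_numAbove_lt_eq {ι β : Type*} [Fintype ι]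
    [LinearOrder β] [MeasurableSpace β] [TopologicalSpace β] [OpensMeasurableSpace β]
    [OrderClosedTopology β] [SecondCountableTopology β] {X : ι → Ω → β}
    (hX : ∀ i, Measurable (X i)) (hindep : iIndepFun X μ) {ν : Measure β}
    (hident : ∀ i, μ.map (X i) = ν) (k : ℕ) (j j' : ι) :
    μ {ω | numAbove (fun i => X i ω) j < k} = μ {ω | numAbove (fun i => X i ω) j' < k} := by
  classical
  set σ := Equiv.swap j j'
  have hC : MeasurableSet {x : ι → β | numAbove x j' < k} :=
    measurable_numAbove j' measurableSet_Iio
  have hpre : {ω | numAbove (fun i => X i ω) j < k}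
      = (fun ω i => X (σ i) ω) ⁻¹' {x | numAbove x j' < k} := by
    ext ω
    simp only [Set.mem_ofPred_eq, Set.mem_preimage]
    rw [show (fun i => X (σ i) ω) = (fun i => X i ω) ∘ σ from rfl, numAbove_comp_perm]
    simp [σ]
  rw [hpre, ← Measure.map_apply (measurable_pi_lambda _ fun i => hX (σ i)) hC,
    hindep.map_perm_eq hX hident, Measure.map_apply (measurable_pi_lambda _ hX) hC]
  rfl

end ProbabilityTheory

noncomputable def calibratedThreshold {n : ℕ} (α : ℝ) (y : Fin n → ℝ) : ℝ :=
  sInf {lam : ℝ | (1 + ∑ i : Fin n, (if lam < y i then (1 : ℝ) else 0)) / (n + 1) ≤ α}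

lemma calibratedThreshold_lt {n : ℕ} {α : ℝ} (x : Fin (n + 1) → ℝ) (hα : α < 1)
    (hties : ∀ i : Fin n, x i.castSucc ≠ x (Fin.last n))
    (hrank : numAbove x (Fin.last n) < ⌊α * (n + 1)⌋₊) :
    calibratedThreshold α (fun i => x i.castSucc) < x (Fin.last n) := by
  have hn : (0 : ℝ) < n + 1 := by positivity
  have hcount : 1 + ∑ i : Fin n, (if x (Fin.last n) < x i.castSucc then (1 : ℝ) else 0)
      ≤ α * (n + 1) := by
    have hle : ((numAbove x (Fin.last n) + 1 : ℕ) : ℝ) ≤ α * (n + 1) :=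
      (Nat.le_floor_iff' (by omega)).1 (Nat.succ_le_of_lt hrank)
    rwa [Nat.cast_add_one, numAbove_last_eq_sum, add_comm] at hle
  obtain ⟨l, hlt, hl⟩ := exists_lt_forall_lt_iff _ hties
  refine (csInf_le ?_ ?_).trans_lt hlt
  · obtain ⟨b, hb⟩ := (Set.finite_range fun i : Fin n => x i.castSucc).bddBelow
    refine ⟨b, fun l' hl' => le_of_not_gt fun hl'b => ?_⟩
    have hall (i : Fin n) : l' < x i.castSucc := hl'b.trans_le (hb ⟨i, rfl⟩)
    have : (1 + (n : ℝ)) / (n + 1) ≤ α := by simpa [hall] using hl'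
    rw [add_comm, div_self hn.ne'] at this
    linarith
  · simp only [Set.mem_ofPred_eq, hl]
    rw [div_le_iff₀ hn]
    exact hcount

lemma sub_one_div_lt_toReal_of_floor_le {n : ℕ} {α : ℝ} {p : ℝ≥0∞} (hp : p ≠ ∞)
    (h : (⌊α * (n + 1)⌋₊ : ℝ≥0∞) ≤ (n + 1 : ℕ) * p) : α - 1 / (n + 1) < p.toReal := by
  have hreal := ENNReal.toReal_mono (by finiteness) h
  rw [ENNReal.toReal_mul, ENNReal.toReal_natCast, ENNReal.toReal_natCast, Nat.cast_succ] at hreal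
  have hfloor : α * (n + 1) < ⌊α * (n + 1)⌋₊ + 1 := Nat.lt_floor_add_one _
  rw [sub_lt_iff_lt_add, add_div' _ _ _ (by positivity), lt_div_iff₀ (by positivity)]
  linarith

theorem racer_risk_lower_bound_general {Ω : Type*} [MeasurableSpace Ω]
    (μ : Measure Ω) [IsProbabilityMeasure μ]
    (n : ℕ) (s : Fin (n + 1) → Ω → ℝ) (hmeas : ∀ i, Measurable (s i))
    (hindep : ProbabilityTheory.iIndepFun s μ)
    (hident : ∀ i, Measure.map (s i) μ = Measure.map (s 0) μ)
    (hcont : ∀ (i : Fin (n + 1)) (c : ℝ), μ {ω | s i ω = c} = 0)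
    (α : ℝ) (hα2 : α < 1)
    (lamhat : Ω → ℝ)
    (hlam : ∀ ω, lamhat ω = sInf {lam : ℝ |
      (1 + ∑ i : Fin n, (if lam < s i.castSucc ω then (1 : ℝ) else 0)) / (n + 1) ≤ α}) :
    α - 2 / (n + 1) ≤ (μ {ω | lamhat ω < s (Fin.last n) ω}).toReal := by
  set k := ⌊α * (n + 1)⌋₊
  set A : Fin (n + 1) → Set Ω := fun j => {ω | numAbove (fun i => s i ω) j < k}
  set B := {ω | lamhat ω < s (Fin.last n) ω}
  have hA (j : Fin (n + 1)) : MeasurableSet (A j) :=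
    (measurable_numAbove j).comp (measurable_pi_lambda _ hmeas) measurableSet_Iio
  have hk : k ≤ n + 1 := Nat.floor_le_of_le (by push_cast; nlinarith)
  have hsum : (k : ℝ≥0∞) ≤ ∑ j, μ (A j) :=
    natCast_le_sum_measure_of_le_card hA fun ω => by
      simpa [A] using le_card_numAbove_lt (fun i => s i ω) (by simpa using hk)
  have hexch (j : Fin (n + 1)) : μ (A j) = μ (A (Fin.last n)) :=
    measure_numAbove_lt_eq hmeas hindep hident k j (Fin.last n)
  have hlast : μ (A (Fin.last n)) ≤ μ B := by
    have hnotie : ∀ᵐ ω ∂μ, ∀ i : Fin n, s i.castSucc ω ≠ s (Fin.last n) ω :=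
      ae_all_iff.2 fun i => ae_iff.2 <| by
        simpa using (hindep.indepFun (Fin.castSucc_lt_last i).ne).measure_eq_eq_zero
          (hmeas _) (hmeas _) (hcont _)
    refine measure_mono_ae (hnotie.mono fun ω hω hωA => ?_)
    change lamhat ω < s (Fin.last n) ω
    rw [hlam ω]
    exact calibratedThreshold_lt (fun i => s i ω) hα2 hω hωA
  have hkB : (k : ℝ≥0∞) ≤ (n + 1 : ℕ) * μ B :=
    calc (k : ℝ≥0∞) ≤ ∑ j, μ (A j) := hsum
      _ = (n + 1 : ℕ) * μ (A (Fin.last n)) := by simp [hexch]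
      _ ≤ (n + 1 : ℕ) * μ B := by gcongr
  have hdiv : 1 / ((n : ℝ) + 1) ≤ 2 / (n + 1) := by gcongr; norm_num
  linarith [sub_one_div_lt_toReal_of_floor_le (measure_ne_top μ B) hkB]

/-- Risk lower bound: if s₁,…,s_{n+1} are i.i.d. with continuous distribution and
λ̂ = inf{λ : (1 + Σ_{i=1}^n 1{s_i > λ})/(n+1) ≤ α} with α ∈ (0,1), α(n+1) ≥ 1,
then P(s_{n+1} > λ̂) ≥ α − 2/(n+1). -/
theorem racer_risk_lower_bound {Ω : Type*} [MeasurableSpace Ω]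
    (μ : Measure Ω) [IsProbabilityMeasure μ]
    (n : ℕ) (s : Fin (n + 1) → Ω → ℝ) (hmeas : ∀ i, Measurable (s i))
    (hindep : ProbabilityTheory.iIndepFun s μ)
    (hident : ∀ i, Measure.map (s i) μ = Measure.map (s 0) μ)
    (hcont : ∀ (i : Fin (n + 1)) (c : ℝ), μ {ω | s i ω = c} = 0)
    (α : ℝ) (hα1 : 0 < α) (hα2 : α < 1) (hα3 : 1 ≤ α * (n + 1))
    (lamhat : Ω → ℝ)
    (hlam : ∀ ω, lamhat ω = sInf {lam : ℝ |
      (1 + ∑ i : Fin n, (if lam < s i.castSucc ω then (1 : ℝ) else 0)) / (n + 1) ≤ α}) :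
    α - 2 / (n + 1) ≤ (μ {ω | lamhat ω < s (Fin.last n) ω}).toReal :=
  racer_risk_lower_bound_general μ n s hmeas hindep hident hcont α hα2 lamhat hlam
end

section
/- Under exchangeability of s₁,…,s_{n+1} and with λ̂ defined by λ̂ = inf{λ : (n/(n+1))·L̄_n(λ) + 1/(n+1) ≤ α} where L̄_n(λ) = (1/n)Σ_{i=1}^n 1{s_i > λ}, combining the upper and lower bounds yields α − 2/(n+1) ≤ P(s_{n+1} > λ̂) ≤ α, provided additionally the s_i are i.i.d. with continuous distribution and α(n+1) ≥ 1. -/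
/-!
With `m = ⌊α (n + 1) - 1⌋₊`, the threshold `λ̂` is the least `λ` exceeded by at most `m` of the
first `n` scores. Away from ties, `s_{n+1} > λ̂` therefore holds exactly when at most `m` of all
`n + 1` scores exceed `s_{n+1}`, i.e. when `s_{n+1}` is among the `m + 1` largest scores.
Independence and atomless marginals exclude ties almost surely, and exchangeability makes each of
the `n + 1` indices equally likely to be among the `m + 1` largest, so
`P(s_{n+1} > λ̂) = (m + 1) / (n + 1)`, which lies in `(α - 1 / (n + 1), α]`.
-/

open Finset Function Filter Topology MeasureTheory ProbabilityTheory
open scoped ENNReal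

-- `n * L̄_n(λ)` is `countAbove (s_1, …, s_n) λ`.
noncomputable def countAbove {ι : Type*} [Fintype ι] (x : ι → ℝ) (t : ℝ) : ℕ :=
  #{i | t < x i}

section Counting

variable {ι : Type*} [Fintype ι] {x : ι → ℝ}

theorem countAbove_antitone : Antitone (countAbove x) := fun _ _ hst =>
  card_le_card <| monotone_filter_right _ fun _ _ h => hst.trans_lt h

theorem countAbove_comp_equiv {κ : Type*} [Fintype κ] (e : κ ≃ ι) (t : ℝ) :
    countAbove (x ∘ e) t = countAbove x t :=
  card_equiv e (by simp)

theorem countAbove_lt_of_lt_apply {t : ℝ} {k : ι} (h : t < x k) :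
    countAbove x (x k) < countAbove x t :=
  card_lt_card <| (ssubset_iff_of_subset (monotone_filter_right _ fun _ _ hj => h.trans hj)).2
    ⟨k, by simp [h]⟩

theorem countAbove_apply_lt_card (k : ι) : countAbove x (x k) < Fintype.card ι :=
  card_lt_univ_of_notMem (x := k) (by simp)

theorem card_countAbove_apply_le (hx : Injective x) {m : ℕ} (hm : m < Fintype.card ι) :
    #{k | countAbove x (x k) ≤ m} = m + 1 := by
  set r : ι → ℕ := fun k => countAbove x (x k)
  have hr : Injective r := fun k k' hkk' => by
    rcases lt_trichotomy (x k) (x k') with h | h | h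
    · exact absurd hkk' (countAbove_lt_of_lt_apply h).ne'
    · exact hx h
    · exact absurd hkk' (countAbove_lt_of_lt_apply h).ne
  have himage : univ.image r = range (Fintype.card ι) :=
    eq_of_subset_of_card_le (fun v hv => by
        obtain ⟨k, -, rfl⟩ := mem_image.1 hv
        exact mem_range.2 (countAbove_apply_lt_card k))
      (by rw [card_range, card_image_of_injective _ hr, card_univ])
  calc #{k | r k ≤ m} = #(({k | r k ≤ m} : Finset ι).image r) :=
        (card_image_of_injective _ hr).symm
    _ = #{v ∈ range (Fintype.card ι) | v ≤ m} := by rw [← himage, filter_image]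
    _ = m + 1 := by
        rw [show {v ∈ range (Fintype.card ι) | v ≤ m} = range (m + 1) by ext; simp; omega,
          card_range]

theorem sInf_setOf_countAbove_le_lt_iff {m : ℕ} (hm : m < Fintype.card ι) {y : ℝ}
    (hy : ∀ i, x i ≠ y) : sInf {t | countAbove x t ≤ m} < y ↔ countAbove x y ≤ m := by
  have hne : {t | countAbove x t ≤ m}.Nonempty := by
    obtain ⟨b, hb⟩ := (Set.finite_range x).bddAbove
    refine ⟨b, ?_⟩
    simp only [Set.mem_ofPred_eq, countAbove]
    rw [filter_false_of_mem fun i _ => not_lt.2 (hb ⟨i, rfl⟩)]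
    simp
  have hbdd : BddBelow {t | countAbove x t ≤ m} := by
    obtain ⟨b, hb⟩ := (Set.finite_range x).bddBelow
    refine ⟨b, fun t ht => not_lt.1 fun htb => hm.not_ge ?_⟩
    simp only [Set.mem_ofPred_eq, countAbove] at ht
    rwa [filter_true_of_mem fun i _ => htb.trans_le (hb ⟨i, rfl⟩), card_univ] at ht
  constructor
  · intro h
    obtain ⟨t, ht, hty⟩ := (csInf_lt_iff hbdd hne).1 h
    exact (countAbove_antitone hty.le).trans ht
  · intro h
    -- below `y` and above every `x i < y`, the count of exceedances is that of `y`
    have hlocal : ∀ᶠ t in 𝓝[<] y, ∀ i, (t < x i ↔ y < x i) := eventually_all.2 fun i => by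
      rcases (hy i).lt_or_gt with hi | hi
      · filter_upwards [Ioo_mem_nhdsLT hi] with t ht
        exact iff_of_false ht.1.le.not_gt (lt_asymm hi)
      · filter_upwards [self_mem_nhdsWithin] with t ht
        exact iff_of_true ((Set.mem_Iio.1 ht).trans hi) hi
    obtain ⟨t, ht, hty⟩ := (hlocal.and self_mem_nhdsWithin).exists
    refine (csInf_le hbdd ?_).trans_lt hty
    simpa only [Set.mem_ofPred_eq, countAbove, filter_congr fun i _ => ht i] using h

theorem countAbove_castSucc_last {n : ℕ} (x : Fin (n + 1) → ℝ) :
    countAbove (fun i : Fin n => x i.castSucc) (x (Fin.last n)) =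
      countAbove x (x (Fin.last n)) := by
  simp only [countAbove, card_filter, Fin.sum_univ_castSucc, lt_irrefl, if_false, add_zero]

end Counting

theorem inflatedRisk_le_iff {n : ℕ} (hn : n ≠ 0) {α : ℝ} (hα : 1 ≤ α * (n + 1)) (k : ℕ) :
    n / (n + 1) * (1 / n * (k : ℝ)) + 1 / (n + 1) ≤ α ↔ k ≤ ⌊α * (n + 1) - 1⌋₊ := by
  rw [Nat.le_floor_iff (by linarith), show n / (n + 1) * (1 / n * (k : ℝ)) + 1 / (n + 1)
    = (k + 1) / (n + 1) by field_simp, div_le_iff₀ (by positivity)]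
  constructor <;> intro h <;> linarith

theorem floor_sub_one_add_one_div_mem_Icc {n : ℕ} {α : ℝ} (hα : 1 ≤ α * (n + 1)) :
    (⌊α * (n + 1) - 1⌋₊ + 1 : ℝ) / (n + 1) ∈ Set.Icc (α - 2 / (n + 1)) α := by
  have hle : (⌊α * (n + 1) - 1⌋₊ : ℝ) ≤ α * (n + 1) - 1 := Nat.floor_le (by linarith)
  have hgt : α * (n + 1) - 1 < ⌊α * (n + 1) - 1⌋₊ + 1 := Nat.lt_floor_add_one _
  have hn : (0 : ℝ) < n + 1 := by positivity
  constructor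
  · rw [le_div_iff₀ hn, sub_mul, div_mul_cancel₀ _ hn.ne']
    linarith
  · rw [div_le_iff₀ hn]
    linarith

section Probability

variable {Ω : Type*} [MeasurableSpace Ω] {μ : Measure Ω}

theorem measure_eq_eq_zero_of_indepFun [IsFiniteMeasure μ] {X Y : Ω → ℝ} (hX : Measurable X)
    (hY : Measurable Y) (hXY : IndepFun X Y μ) (hYc : ∀ c, μ {ω | Y ω = c} = 0) :
    μ {ω | X ω = Y ω} = 0 := by
  have hdiag : MeasurableSet {p : ℝ × ℝ | p.1 = p.2} :=
    measurableSet_eq_fun measurable_fst measurable_snd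
  have hYatom (c : ℝ) : μ.map Y {c} = 0 := by
    rw [Measure.map_apply hY (measurableSet_singleton c)]
    exact hYc c
  calc μ {ω | X ω = Y ω} = μ.map (fun ω => (X ω, Y ω)) {p | p.1 = p.2} :=
        (Measure.map_apply (hX.prodMk hY) hdiag).symm
    _ = ((μ.map X).prod (μ.map Y)) {p | p.1 = p.2} := by
        rw [(indepFun_iff_map_prod_eq_prod_map_map hX.aemeasurable hY.aemeasurable).1 hXY]
    _ = 0 := by simp [Measure.prod_apply hdiag, Set.preimage, hYatom]

theorem ae_injective_of_iIndepFun [IsFiniteMeasure μ] {ι : Type*} [Countable ι]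
    {X : ι → Ω → ℝ} (hX : ∀ i, Measurable (X i)) (hindep : iIndepFun X μ)
    (hc : ∀ i c, μ {ω | X i ω = c} = 0) :
    ∀ᵐ ω ∂μ, Injective fun i => X i ω := by
  have hne : ∀ᵐ ω ∂μ, ∀ i j, X i ω = X j ω → i = j := by
    refine ae_all_iff.2 fun i => ae_all_iff.2 fun j => ?_
    by_cases hij : i = j
    · exact ae_of_all _ fun _ _ => hij
    · refine measure_mono_null (fun ω hω => ?_)
        (measure_eq_eq_zero_of_indepFun (hX i) (hX j) (hindep.indepFun hij) (hc j))
      simp only [Set.mem_compl_iff, Set.mem_ofPred_eq, hij, imp_false, not_not] at hω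
      exact hω
  filter_upwards [hne] with ω hω i j using hω i j

variable {ι : Type*} [Fintype ι] {X : Ω → ι → ℝ}

theorem measurable_countAbove_apply (k : ι) :
    Measurable fun x : ι → ℝ => countAbove x (x k) := by
  simp only [countAbove, card_filter]
  exact Finset.measurable_sum _ fun j _ => Measurable.ite
    (measurableSet_lt (measurable_pi_apply k) (measurable_pi_apply j)) measurable_const
    measurable_const

theorem sum_measure_countAbove_apply_le (hX : Measurable X) (hinj : ∀ᵐ ω ∂μ, Injective (X ω))
    {m : ℕ} (hm : m < Fintype.card ι) :
    ∑ k, μ {ω | countAbove (X ω) (X ω k) ≤ m} = (m + 1) * μ Set.univ := by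
  have hA (k : ι) : MeasurableSet {ω | countAbove (X ω) (X ω k) ≤ m} :=
    (measurable_countAbove_apply k).comp hX measurableSet_Iic
  calc ∑ k, μ {ω | countAbove (X ω) (X ω k) ≤ m}
      = ∫⁻ ω, ∑ k, {ω | countAbove (X ω) (X ω k) ≤ m}.indicator 1 ω ∂μ := by
        rw [lintegral_finsetSum _ fun k _ => measurable_one.indicator (hA k)]
        simp_rw [lintegral_indicator_one (hA _)]
    _ = ∫⁻ _, (m + 1 : ℝ≥0∞) ∂μ := by
        refine lintegral_congr_ae (hinj.mono fun ω hω => ?_)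
        simp only [Set.indicator_apply, Set.mem_ofPred_eq, Pi.one_apply, sum_boole,
          card_countAbove_apply_le hω hm]
        push_cast; rfl
    _ = (m + 1) * μ Set.univ := lintegral_const _

variable [DecidableEq ι]

theorem measure_countAbove_apply_le_eq_of_exchangeable (hX : Measurable X)
    (hexch : ∀ σ : Equiv.Perm ι, μ.map (fun ω => X ω ∘ σ) = μ.map X) (m : ℕ) (k k' : ι) :
    μ {ω | countAbove (X ω) (X ω k) ≤ m} = μ {ω | countAbove (X ω) (X ω k') ≤ m} := by
  set B : Set (ι → ℝ) := {x | countAbove x (x k') ≤ m}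
  have hB : MeasurableSet B := measurable_countAbove_apply k' measurableSet_Iic
  have hswap :
      {ω | countAbove (X ω) (X ω k) ≤ m} = (fun ω => X ω ∘ Equiv.swap k k') ⁻¹' B := by
    ext ω
    simp [B, countAbove_comp_equiv]
  rw [hswap, ← Measure.map_apply (by fun_prop) hB, hexch, Measure.map_apply hX hB]
  rfl

theorem measure_countAbove_apply_le_eq [IsProbabilityMeasure μ] (hX : Measurable X)
    (hexch : ∀ σ : Equiv.Perm ι, μ.map (fun ω => X ω ∘ σ) = μ.map X)
    (hinj : ∀ᵐ ω ∂μ, Injective (X ω)) {m : ℕ} (hm : m < Fintype.card ι) (k : ι) :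
    μ {ω | countAbove (X ω) (X ω k) ≤ m} = (m + 1) / Fintype.card ι := by
  have hsum := sum_measure_countAbove_apply_le hX hinj hm
  simp only [measure_countAbove_apply_le_eq_of_exchangeable hX hexch m _ k, sum_const,
    card_univ, nsmul_eq_mul, measure_univ, mul_one] at hsum
  exact (ENNReal.eq_div_iff (by simp; omega) (by simp)).2 hsum

end Probability

theorem racer_two_sided_bound_general {Ω : Type*} [MeasurableSpace Ω]
    (μ : Measure Ω) [IsProbabilityMeasure μ]
    (n : ℕ) (s : Fin (n + 1) → Ω → ℝ) (hmeas : ∀ i, Measurable (s i))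
    (hexch : ∀ σ : Equiv.Perm (Fin (n + 1)),
      Measure.map (fun ω i => s (σ i) ω) μ = Measure.map (fun ω i => s i ω) μ)
    (hindep : ProbabilityTheory.iIndepFun s μ)
    (hcont : ∀ (i : Fin (n + 1)) (c : ℝ), μ {ω | s i ω = c} = 0)
    (α : ℝ) (hα2 : α < 1) (hα3 : 1 ≤ α * (n + 1))
    (Lbar : Ω → ℝ → ℝ)
    (hL : ∀ ω lam, Lbar ω lam =
      (1 / n) * ∑ i : Fin n, (if lam < s i.castSucc ω then (1 : ℝ) else 0))
    (lamhat : Ω → ℝ)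
    (hlam : ∀ ω, lamhat ω = sInf {lam : ℝ |
      (n / (n + 1)) * Lbar ω lam + 1 / (n + 1) ≤ α}) :
    α - 2 / (n + 1) ≤ (μ {ω | lamhat ω < s (Fin.last n) ω}).toReal ∧
      (μ {ω | lamhat ω < s (Fin.last n) ω}).toReal ≤ α := by
  have hn : n ≠ 0 := by
    rintro rfl
    norm_num at hα3
    linarith
  set m := ⌊α * (n + 1) - 1⌋₊
  have hmn : m < n := (Nat.floor_lt (by linarith)).2 (by nlinarith)
  have hinj := ae_injective_of_iIndepFun hmeas hindep hcont
  have hlamhat (ω : Ω) :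
      lamhat ω = sInf {t | countAbove (fun i : Fin n => s i.castSucc ω) t ≤ m} := by
    simp only [hlam, hL, sum_boole, inflatedRisk_le_iff hn hα3]
    rfl
  have hevent : {ω | lamhat ω < s (Fin.last n) ω}
      =ᵐ[μ] {ω | countAbove (fun i => s i ω) (s (Fin.last n) ω) ≤ m} := by
    filter_upwards [hinj] with ω hω
    refine propext ?_
    change lamhat ω < _ ↔ countAbove _ _ ≤ m
    rw [hlamhat, sInf_setOf_countAbove_le_lt_iff (by simpa using hmn)
      fun i => hω.ne (Fin.castSucc_lt_last i).ne, countAbove_castSucc_last (fun i => s i ω)]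
  have hprob : (μ {ω | lamhat ω < s (Fin.last n) ω}).toReal = (m + 1) / (n + 1) := by
    rw [measure_congr hevent, measure_countAbove_apply_le_eq (measurable_pi_lambda _ hmeas) hexch
      hinj (by simpa using hmn.trans n.lt_succ_self), Fintype.card_fin, ENNReal.toReal_div]
    norm_cast
  rw [hprob]
  exact floor_sub_one_add_one_div_mem_Icc hα3

/-- Two-sided bound: with λ̂ = inf{λ : (n/(n+1))·L̄_n(λ) + 1/(n+1) ≤ α},
L̄_n(λ) = (1/n) Σ_{i=1}^n 1{s_i > λ}, for exchangeable (indeed i.i.d. with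
continuous distribution) s₁,…,s_{n+1} and α(n+1) ≥ 1,
α − 2/(n+1) ≤ P(s_{n+1} > λ̂) ≤ α. -/
theorem racer_two_sided_bound {Ω : Type*} [MeasurableSpace Ω]
    (μ : Measure Ω) [IsProbabilityMeasure μ]
    (n : ℕ) (s : Fin (n + 1) → Ω → ℝ) (hmeas : ∀ i, Measurable (s i))
    (hexch : ∀ σ : Equiv.Perm (Fin (n + 1)),
      Measure.map (fun ω i => s (σ i) ω) μ = Measure.map (fun ω i => s i ω) μ)
    (hindep : ProbabilityTheory.iIndepFun s μ)
    (hident : ∀ i, Measure.map (s i) μ = Measure.map (s 0) μ)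
    (hcont : ∀ (i : Fin (n + 1)) (c : ℝ), μ {ω | s i ω = c} = 0)
    (α : ℝ) (hα1 : 0 < α) (hα2 : α < 1) (hα3 : 1 ≤ α * (n + 1))
    (Lbar : Ω → ℝ → ℝ)
    (hL : ∀ ω lam, Lbar ω lam =
      (1 / n) * ∑ i : Fin n, (if lam < s i.castSucc ω then (1 : ℝ) else 0))
    (lamhat : Ω → ℝ)
    (hlam : ∀ ω, lamhat ω = sInf {lam : ℝ |
      (n / (n + 1)) * Lbar ω lam + 1 / (n + 1) ≤ α}) :
    α - 2 / (n + 1) ≤ (μ {ω | lamhat ω < s (Fin.last n) ω}).toReal ∧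
      (μ {ω | lamhat ω < s (Fin.last n) ω}).toReal ≤ α :=
  racer_two_sided_bound_general μ n s hmeas hexch hindep hcont α hα2 hα3 Lbar hL lamhat hlam
end

section
/- Exchangeability rank bound: if s₁,…,s_{n+1} are exchangeable real random variables, then for any k ∈ {1,…,n+1}, P(s_{n+1} is among the k largest of s₁,…,s_{n+1}, with ties counted favorably) ≤ k/(n+1); more precisely, P(Σ_{i=1}^{n+1} 1{s_i ≥ s_{n+1}} ≤ k) ≤ k/(n+1). -/
/-!
Exchangeability makes the events `{rank of coordinate j ≤ k}` equiprobable, since the swap of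
`j` and `n + 1` maps one onto the other. Pointwise at most `k` of these `n + 1` events occur
(every coordinate of rank `≤ k` lies weakly above the least such coordinate), so their
probabilities sum to at most `k`, and each is at most `k / (n + 1)`.
-/

open MeasureTheory Finset

section Rank

variable {ι α : Type*} [Fintype ι] [LinearOrder α]

def topRank (x : ι → α) (j : ι) : ℕ := #{i | x j ≤ x i}

theorem topRank_eq_sum (x : ι → α) (j : ι) :
    topRank x j = ∑ i, if x j ≤ x i then 1 else 0 :=
  card_filter _ _

theorem topRank_comp_perm (x : ι → α) (σ : Equiv.Perm ι) (j : ι) :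
    topRank (x ∘ σ) j = topRank x (σ j) := by
  unfold topRank
  exact card_equiv σ (by simp)

theorem card_topRank_le_le (x : ι → α) (k : ℕ) : #{j | topRank x j ≤ k} ≤ k := by
  obtain h | ⟨j₀, hj₀, hmin⟩ := ({j | topRank x j ≤ k} : Finset ι).eq_empty_or_nonempty.imp_right
    fun h => exists_min_image _ x h
  · simp [h]
  · calc #{j | topRank x j ≤ k} ≤ topRank x j₀ :=
          card_le_card fun j hj => by simpa using hmin j hj
      _ ≤ k := (mem_filter.1 hj₀).2

variable [TopologicalSpace α] [OrderClosedTopology α] [SecondCountableTopology α]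
  [MeasurableSpace α] [OpensMeasurableSpace α]

theorem measurable_topRank (j : ι) : Measurable fun x : ι → α => topRank x j := by
  simp only [topRank_eq_sum]
  exact Finset.measurable_sum _ fun i _ => Measurable.ite
    (measurableSet_le (measurable_pi_apply j) (measurable_pi_apply i)) measurable_const
    measurable_const

theorem measurableSet_topRank_le (j : ι) (k : ℕ) : MeasurableSet {x : ι → α | topRank x j ≤ k} :=
  measurable_topRank j measurableSet_Iic

end Rank

open Classical in
theorem sum_measure_le_of_card_mem_le {β ι : Type*} [MeasurableSpace β] [Fintype ι]
    (ν : Measure β) {A : ι → Set β} (hA : ∀ j, MeasurableSet (A j)) (k : ℕ)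
    (hk : ∀ x, #{j | x ∈ A j} ≤ k) : ∑ j, ν (A j) ≤ k * ν Set.univ := by
  calc ∑ j, ν (A j) = ∫⁻ x, ∑ j, (A j).indicator 1 x ∂ν := by
        rw [lintegral_finsetSum _ fun j _ => measurable_one.indicator (hA j)]
        simp_rw [lintegral_indicator_one (hA _)]
    _ ≤ ∫⁻ _, (k : ENNReal) ∂ν := lintegral_mono fun x => by
        simpa [Set.indicator_apply, sum_boole] using hk x
    _ = k * ν Set.univ := lintegral_const _

def IsExchangeable {ι α : Type*} [MeasurableSpace α] (ν : Measure (ι → α)) : Prop :=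
  ∀ σ : Equiv.Perm ι, ν.map (fun x => x ∘ σ) = ν

namespace IsExchangeable

variable {ι α : Type*} [Fintype ι] [LinearOrder α] [TopologicalSpace α] [OrderClosedTopology α]
  [SecondCountableTopology α] [MeasurableSpace α] [OpensMeasurableSpace α]
  {ν : Measure (ι → α)}

theorem measure_topRank_le_eq (hν : IsExchangeable ν) (i j : ι) (k : ℕ) :
    ν {x | topRank x i ≤ k} = ν {x | topRank x j ≤ k} := by
  classical
  set σ := Equiv.swap i j
  have hpre : (fun x : ι → α => x ∘ σ) ⁻¹' {x | topRank x j ≤ k} = {x | topRank x i ≤ k} := by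
    ext x
    simp [topRank_comp_perm, σ]
  rw [← hpre, ← Measure.map_apply (by fun_prop) (measurableSet_topRank_le j k), hν σ]

theorem measure_topRank_le_le [IsProbabilityMeasure ν] (hν : IsExchangeable ν) (j : ι) (k : ℕ) :
    ν {x | topRank x j ≤ k} ≤ k / Fintype.card ι := by
  classical
  have hsum := sum_measure_le_of_card_mem_le ν (A := fun i => {x | topRank x i ≤ k})
    (measurableSet_topRank_le · k) k fun x => by simpa using card_topRank_le_le x k
  simp only [hν.measure_topRank_le_eq _ j, sum_const, card_univ, nsmul_eq_mul, measure_univ,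
    mul_one] at hsum
  rw [ENNReal.le_div_iff_mul_le (by simp [(Fintype.card_pos_iff.2 ⟨j⟩).ne']) (by simp), mul_comm]
  exact hsum

end IsExchangeable

theorem racer_exchangeable_rank_bound_general {Ω : Type*} [MeasurableSpace Ω]
    (μ : Measure Ω) [IsProbabilityMeasure μ]
    (n : ℕ) (s : Fin (n + 1) → Ω → ℝ) (hmeas : ∀ i, Measurable (s i))
    (hexch : ∀ σ : Equiv.Perm (Fin (n + 1)),
      Measure.map (fun ω i => s (σ i) ω) μ = Measure.map (fun ω i => s i ω) μ)
    (k : ℕ) :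
    (μ {ω | (∑ i : Fin (n + 1),
        (if s (Fin.last n) ω ≤ s i ω then (1 : ℕ) else 0)) ≤ k}).toReal ≤
      (k : ℝ) / (n + 1) := by
  set S : Ω → Fin (n + 1) → ℝ := fun ω i => s i ω
  have hS : Measurable S := measurable_pi_lambda _ hmeas
  have hν : IsExchangeable (μ.map S) := fun σ => by
    rw [Measure.map_map (by fun_prop) hS]
    exact hexch σ
  have hevent : {ω | (∑ i : Fin (n + 1), (if s (Fin.last n) ω ≤ s i ω then (1 : ℕ) else 0)) ≤ k}
      = S ⁻¹' {x | topRank x (Fin.last n) ≤ k} := by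
    ext ω
    simp only [Set.mem_ofPred_eq, Set.mem_preimage, S, topRank_eq_sum]
  have := Measure.isProbabilityMeasure_map (μ := μ) hS.aemeasurable
  have hbound := hν.measure_topRank_le_le (Fin.last n) k
  rw [Measure.map_apply hS (measurableSet_topRank_le _ k), ← hevent] at hbound
  calc _ ≤ ((k : ENNReal) / (n + 1 : ℕ)).toReal :=
        ENNReal.toReal_mono (ENNReal.div_ne_top (by simp) (by simp)) (by simpa using hbound)
    _ = (k : ℝ) / (n + 1) := by
        rw [ENNReal.toReal_div, ENNReal.toReal_natCast, ENNReal.toReal_natCast]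
        push_cast
        rfl

/-- Exchangeability rank bound: for exchangeable s₁,…,s_{n+1} and k ∈ {1,…,n+1},
P(Σ_{i=1}^{n+1} 1{s_i ≥ s_{n+1}} ≤ k) ≤ k/(n+1). -/
theorem racer_exchangeable_rank_bound {Ω : Type*} [MeasurableSpace Ω]
    (μ : Measure Ω) [IsProbabilityMeasure μ]
    (n : ℕ) (s : Fin (n + 1) → Ω → ℝ) (hmeas : ∀ i, Measurable (s i))
    (hexch : ∀ σ : Equiv.Perm (Fin (n + 1)),
      Measure.map (fun ω i => s (σ i) ω) μ = Measure.map (fun ω i => s i ω) μ)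
    (k : ℕ) (hk1 : 1 ≤ k) (hk2 : k ≤ n + 1) :
    (μ {ω | (∑ i : Fin (n + 1),
        (if s (Fin.last n) ω ≤ s i ω then (1 : ℕ) else 0)) ≤ k}).toReal ≤
      (k : ℝ) / (n + 1) :=
  racer_exchangeable_rank_bound_general μ n s hmeas hexch k
end
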